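/- arXiv:1011.0450 — 2 statements merged into one kernel-verified Lean document; each statement's English description precedes it below -/
import Mathlib

section
/- Let A_1,...,A_k be m-by-n real matrices, b_1,...,b_k vectors in R^m, and lambda > 0. Define the (P3) objective F(x, u) := (1/2) sum_{i=1}^k ||b_i - A_i x - u_i||_2^2 + lambda sum_{i=1}^k ||u_i||_2, where u = (u_1,...,u_k) with u_i in R^m. Then a pair (x*, u*) is a global minimizer of F if and only if x* is a global minimizer of H(x) := sum_{i=1}^k rho_v(b_i - A_i x), and for each i, u*_i is the block soft-threshold of the residual r*_i := b_i - A_i x*, i.e., u*_i = 0 if ||r*_i||_2 <= lambda and u*_i = (1 - lambda/||r*_i||_2) r*_i otherwise. In particular, for every x in R^n, the infimum over u of F(x, u) equals H(x). -/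
open scoped RealInnerProductSpace



/-- Euclidean norm of a vector in `ℝ^m`. -/
noncomputable def euclNorm {m : ℕ} (v : Fin m → ℝ) : ℝ :=
  Real.sqrt (∑ j, v j ^ 2)

/-- The vector Huber function with cutoff `λ`. -/
noncomputable def rhoV {m : ℕ} (lam : ℝ) (r : Fin m → ℝ) : ℝ :=
  if euclNorm r ≤ lam then (1 / 2) * euclNorm r ^ 2
  else lam * euclNorm r - lam ^ 2 / 2

/-- The (P3) objective
`F(x,u) = (1/2) ∑ᵢ ‖bᵢ - Aᵢ x - uᵢ‖₂² + λ ∑ᵢ ‖uᵢ‖₂`. -/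
noncomputable def P3obj {k m n : ℕ} (A : Fin k → Matrix (Fin m) (Fin n) ℝ)
    (b : Fin k → Fin m → ℝ) (lam : ℝ)
    (x : Fin n → ℝ) (u : Fin k → Fin m → ℝ) : ℝ :=
  (1 / 2) * ∑ i, euclNorm (b i - (A i).mulVec x - u i) ^ 2
    + lam * ∑ i, euclNorm (u i)

/-- The generalized Huber objective `H(x) = ∑ᵢ ρ_v(bᵢ - Aᵢ x)`. -/
noncomputable def huberObj {k m n : ℕ} (A : Fin k → Matrix (Fin m) (Fin n) ℝ)
    (b : Fin k → Fin m → ℝ) (lam : ℝ) (x : Fin n → ℝ) : ℝ :=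
  ∑ i, rhoV lam (b i - (A i).mulVec x)

noncomputable def toE {m : ℕ} (v : Fin m → ℝ) : EuclideanSpace ℝ (Fin m) :=
  (WithLp.equiv 2 (Fin m → ℝ)).symm v

noncomputable def soft {m : ℕ} (lam : ℝ) (r : Fin m → ℝ) : Fin m → ℝ :=
  if euclNorm r ≤ lam then 0 else (1 - lam / euclNorm r) • r

lemma euclNorm_eq {m : ℕ} (v : Fin m → ℝ) : euclNorm v = ‖toE v‖ := by
  rw [euclNorm, EuclideanSpace.norm_eq]
  simp [toE, Real.norm_eq_abs, sq_abs]

lemma toE_inj {m : ℕ} {r u : Fin m → ℝ} (h : toE r = toE u) : r = u :=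
  (WithLp.equiv 2 _).symm.injective h

lemma block_ineq {m : ℕ} {lam : ℝ} (hlam : 0 < lam) (r u : Fin m → ℝ) :
    rhoV lam r ≤ (1/2) * euclNorm (r - u) ^ 2 + lam * euclNorm u := by
  have hsub : toE (r - u) = toE r - toE u := rfl
  have hexp : ‖toE r - toE u‖^2 = ‖toE r‖^2 - 2*⟪toE r, toE u⟫ + ‖toE u‖^2 := by
    rw [@norm_sub_sq_real]
  have hc : ⟪toE r, toE u⟫ ≤ ‖toE r‖ * ‖toE u‖ := real_inner_le_norm _ _
  have hs : 0 ≤ ‖toE r‖ := norm_nonneg _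
  have ht : 0 ≤ ‖toE u‖ := norm_nonneg _
  rw [rhoV, euclNorm_eq, euclNorm_eq, euclNorm_eq, hsub]
  split_ifs with h
  · nlinarith [sq_nonneg (‖toE u‖)]
  · push_neg at h
    nlinarith [sq_nonneg (‖toE u‖ - (‖toE r‖ - lam))]

lemma euclNorm_smul {m : ℕ} (c : ℝ) (v : Fin m → ℝ) :
    euclNorm (c • v) = |c| * euclNorm v := by
  rw [euclNorm_eq, euclNorm_eq]
  have : toE (c • v) = c • toE v := rfl
  rw [this, norm_smul, Real.norm_eq_abs]

lemma euclNorm_zero {m : ℕ} : euclNorm (0 : Fin m → ℝ) = 0 := by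
  simp [euclNorm]

lemma block_eq {m : ℕ} {lam : ℝ} (hlam : 0 < lam) (r : Fin m → ℝ) :
    (1/2) * euclNorm (r - soft lam r) ^ 2 + lam * euclNorm (soft lam r) = rhoV lam r := by
  rw [soft, rhoV]
  split_ifs with h
  · simp [euclNorm_zero]
  · push_neg at h
    have hs : 0 < euclNorm r := lt_trans hlam h
    have h1 : r - (1 - lam / euclNorm r) • r = (lam / euclNorm r) • r := by
      funext j; simp [Pi.smul_apply, Pi.sub_apply]; ring
    rw [h1, euclNorm_smul, euclNorm_smul]
    rw [abs_of_nonneg (by positivity), abs_of_nonneg (by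
      have : lam / euclNorm r ≤ 1 := (div_le_one hs).2 h.le
      linarith)]
    field_simp
    ring

lemma block_forced {m : ℕ} {lam : ℝ} (hlam : 0 < lam) (r u : Fin m → ℝ)
    (heq : (1/2) * euclNorm (r - u) ^ 2 + lam * euclNorm u = rhoV lam r) :
    u = soft lam r := by
  have hsub : toE (r - u) = toE r - toE u := rfl
  have hexp : ‖toE r - toE u‖^2 = ‖toE r‖^2 - 2*⟪toE r, toE u⟫ + ‖toE u‖^2 := by
    rw [@norm_sub_sq_real]
  have hc : ⟪toE r, toE u⟫ ≤ ‖toE r‖ * ‖toE u‖ := real_inner_le_norm _ _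
  have hs : 0 ≤ ‖toE r‖ := norm_nonneg _
  have ht : 0 ≤ ‖toE u‖ := norm_nonneg _
  rw [rhoV, euclNorm_eq, euclNorm_eq, euclNorm_eq, hsub] at heq
  rw [soft, euclNorm_eq r]
  split_ifs at heq ⊢ with h
  · -- ‖r‖ ≤ lam : forced u = 0
    have ht0 : ‖toE u‖ ≤ 0 := by nlinarith
    have : toE u = 0 := norm_eq_zero.mp (le_antisymm ht0 ht)
    exact toE_inj this
  · push_neg at h
    have hspos : 0 < ‖toE r‖ := lt_trans hlam h
    have hsq : (‖toE r‖ - ‖toE u‖ - lam)^2 ≤ 0 := by nlinarith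
    have htt : ‖toE u‖ = ‖toE r‖ - lam := by nlinarith [sq_nonneg (‖toE r‖ - ‖toE u‖ - lam)]
    have hce : ⟪toE r, toE u⟫ = ‖toE r‖ * ‖toE u‖ := by nlinarith
    have hkey : ‖toE u‖ • toE r = ‖toE r‖ • toE u := inner_eq_norm_mul_iff_real.mp hce
    have : toE u = (1 - lam / ‖toE r‖) • toE r := by
      have h2 : (‖toE r‖)⁻¹ • (‖toE u‖ • toE r) = (‖toE r‖)⁻¹ • (‖toE r‖ • toE u) := by
        rw [hkey]
      rw [smul_smul, smul_smul, inv_mul_cancel₀ hspos.ne', one_smul] at h2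
      rw [← h2, htt]
      congr 1
      field_simp
    exact toE_inj this


lemma P3obj_eq {k m n : ℕ} (A : Fin k → Matrix (Fin m) (Fin n) ℝ)
    (b : Fin k → Fin m → ℝ) (lam : ℝ) (x : Fin n → ℝ) (u : Fin k → Fin m → ℝ) :
    P3obj A b lam x u
      = ∑ i, ((1/2) * euclNorm ((b i - (A i).mulVec x) - u i) ^ 2 + lam * euclNorm (u i)) := by
  rw [P3obj, Finset.sum_add_distrib, Finset.mul_sum, Finset.mul_sum]

lemma H_le_F {k m n : ℕ} (A : Fin k → Matrix (Fin m) (Fin n) ℝ)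
    (b : Fin k → Fin m → ℝ) {lam : ℝ} (hlam : 0 < lam) (x : Fin n → ℝ)
    (u : Fin k → Fin m → ℝ) :
    huberObj A b lam x ≤ P3obj A b lam x u := by
  rw [P3obj_eq, huberObj]
  exact Finset.sum_le_sum fun i _ => block_ineq hlam _ _

lemma F_soft {k m n : ℕ} (A : Fin k → Matrix (Fin m) (Fin n) ℝ)
    (b : Fin k → Fin m → ℝ) {lam : ℝ} (hlam : 0 < lam) (x : Fin n → ℝ) :
    P3obj A b lam x (fun i => soft lam (b i - (A i).mulVec x)) = huberObj A b lam x := by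
  rw [P3obj_eq, huberObj]
  exact Finset.sum_congr rfl fun i _ => block_eq hlam _


/-- `(x*, u*)` globally minimizes the (P3) objective iff `x*`
globally minimizes `H(x) = ∑ᵢ ρ_v(bᵢ - Aᵢ x)` and each `u*ᵢ` is the block
soft-threshold of the residual `r*ᵢ = bᵢ - Aᵢ x*`; moreover for every `x`, the
infimum over `u` of `F(x, u)` equals `H(x)`. -/
theorem P3_equiv_vector_huber {k m n : ℕ}
    (A : Fin k → Matrix (Fin m) (Fin n) ℝ) (b : Fin k → Fin m → ℝ)
    (lam : ℝ) (hlam : 0 < lam) :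
    (∀ (xstar : Fin n → ℝ) (ustar : Fin k → Fin m → ℝ),
      (∀ (x : Fin n → ℝ) (u : Fin k → Fin m → ℝ),
          P3obj A b lam xstar ustar ≤ P3obj A b lam x u)
        ↔ ((∀ x : Fin n → ℝ, huberObj A b lam xstar ≤ huberObj A b lam x) ∧
            ∀ i : Fin k,
              ustar i =
                if euclNorm (b i - (A i).mulVec xstar) ≤ lam then 0
                else (1 - lam / euclNorm (b i - (A i).mulVec xstar)) •
                  (b i - (A i).mulVec xstar)))
    ∧ (∀ x : Fin n → ℝ,
        sInf (Set.range fun u : Fin k → Fin m → ℝ => P3obj A b lam x u)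
          = huberObj A b lam x) := by

  constructor
  · intro xstar ustar
    constructor
    · intro hmin
      have hFH : P3obj A b lam xstar ustar = huberObj A b lam xstar := by
        refine le_antisymm ?_ (H_le_F A b hlam _ _)
        calc P3obj A b lam xstar ustar
            ≤ P3obj A b lam xstar (fun i => soft lam (b i - (A i).mulVec xstar)) := hmin _ _
          _ = huberObj A b lam xstar := F_soft A b hlam _
      constructor
      · intro x
        calc huberObj A b lam xstar = P3obj A b lam xstar ustar := hFH.symm
          _ ≤ P3obj A b lam x (fun i => soft lam (b i - (A i).mulVec x)) := hmin _ _
          _ = huberObj A b lam x := F_soft A b hlam _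
      · intro i
        have hsum : ∑ i, ((1/2) * euclNorm ((b i - (A i).mulVec xstar) - ustar i) ^ 2
              + lam * euclNorm (ustar i))
            = ∑ i, rhoV lam (b i - (A i).mulVec xstar) := by
          rw [← P3obj_eq, ← huberObj]; exact hFH
        have hterm : ∀ j ∈ Finset.univ,
            rhoV lam (b j - (A j).mulVec xstar)
              ≤ (1/2) * euclNorm ((b j - (A j).mulVec xstar) - ustar j) ^ 2
                + lam * euclNorm (ustar j) := fun j _ => block_ineq hlam _ _
        have := (Finset.sum_eq_sum_iff_of_le hterm).mp hsum.symm i (Finset.mem_univ i)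
        exact block_forced hlam _ _ this.symm
    · rintro ⟨hH, hu⟩
      intro x u
      have hus : ustar = fun i => soft lam (b i - (A i).mulVec xstar) := by
        funext i; rw [hu i]; rfl
      calc P3obj A b lam xstar ustar = huberObj A b lam xstar := by
            rw [hus]; exact F_soft A b hlam _
        _ ≤ huberObj A b lam x := hH x
        _ ≤ P3obj A b lam x u := H_le_F A b hlam _ _
  · intro x
    apply le_antisymm
    · exact csInf_le ⟨huberObj A b lam x, by rintro _ ⟨u, rfl⟩; exact H_le_F A b hlam x u⟩
        ⟨fun i => soft lam (b i - (A i).mulVec x), F_soft A b hlam x⟩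
    · exact le_csInf (Set.range_nonempty _) (by rintro _ ⟨u, rfl⟩; exact H_le_F A b hlam x u)
end

section
/- Let A_1,...,A_k be m-by-n real matrices, b_1,...,b_k vectors in R^m, and delta > 0. Given any x0 in R^n, define weights w_i := 1 / ( ||b_i - A_i x0||_2 + delta ) for i = 1,...,k, and let x' be a minimizer over x in R^n of sum_{i=1}^k w_i ||b_i - A_i x||_2. Then the concave surrogate objective does not increase: sum_{i=1}^k log( ||b_i - A_i x'||_2 + delta ) <= sum_{i=1}^k log( ||b_i - A_i x0||_2 + delta ). -/
open Finset Real

lemma euclNorm_nonneg {m : ℕ} (v : Fin m → ℝ) : 0 ≤ euclNorm v :=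
  Real.sqrt_nonneg _

lemma Real.log_le_log_add_sub_div {a b : ℝ} (ha : 0 < a) (hb : 0 < b) :
    log b ≤ log a + (b - a) / a := by
  have h := log_le_sub_one_of_pos (div_pos hb ha)
  rw [log_div hb.ne' ha.ne'] at h
  rw [sub_div, div_self ha.ne']
  linarith

lemma Real.sum_log_sub_sum_log_le {ι : Type*} (s : Finset ι) {u v : ι → ℝ}
    (hu : ∀ i ∈ s, 0 < u i) (hv : ∀ i ∈ s, 0 < v i) :
    ∑ i ∈ s, log (v i) - ∑ i ∈ s, log (u i) ≤ ∑ i ∈ s, (v i - u i) / u i := by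
  rw [← sum_sub_distrib]
  exact sum_le_sum fun i hi => by linarith [log_le_log_add_sub_div (hu i hi) (hv i hi)]

/-- descent property of the MM iteration (P2a): if `x'` minimizes
the weighted cost `x ↦ ∑ᵢ wᵢ ‖bᵢ - Aᵢ x‖₂` with weights
`wᵢ = 1/(‖bᵢ - Aᵢ x0‖₂ + δ)`, then the concave surrogate objective does not
increase: `∑ᵢ log(‖bᵢ - Aᵢ x'‖₂ + δ) ≤ ∑ᵢ log(‖bᵢ - Aᵢ x0‖₂ + δ)`. -/
theorem MM_descent_property {k m n : ℕ}
    (A : Fin k → Matrix (Fin m) (Fin n) ℝ) (b : Fin k → Fin m → ℝ)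
    (δ : ℝ) (hδ : 0 < δ) (x0 x' : Fin n → ℝ)
    (hmin : ∀ x : Fin n → ℝ,
      ∑ i, (1 / (euclNorm (b i - (A i).mulVec x0) + δ))
          * euclNorm (b i - (A i).mulVec x')
        ≤ ∑ i, (1 / (euclNorm (b i - (A i).mulVec x0) + δ))
          * euclNorm (b i - (A i).mulVec x)) :
    ∑ i, Real.log (euclNorm (b i - (A i).mulVec x') + δ)
      ≤ ∑ i, Real.log (euclNorm (b i - (A i).mulVec x0) + δ) := by
  set r : (Fin n → ℝ) → Fin k → ℝ := fun x i => euclNorm (b i - (A i).mulVec x)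
  have hpos : ∀ x i, 0 < r x i + δ := fun x i => by
    linarith [euclNorm_nonneg (b i - (A i).mulVec x)]
  have htangent := sum_log_sub_sum_log_le univ (u := fun i => r x0 i + δ)
    (v := fun i => r x' i + δ) (fun i _ => hpos x0 i) (fun i _ => hpos x' i)
  have hweighted : ∑ i, (r x' i + δ - (r x0 i + δ)) / (r x0 i + δ)
      = ∑ i, 1 / (r x0 i + δ) * r x' i - ∑ i, 1 / (r x0 i + δ) * r x0 i := by
    rw [← sum_sub_distrib]
    exact sum_congr rfl fun i _ => by ring
  linarith [hmin x0]
end
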